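/- arXiv:1908.04665 — 2 statements merged into one kernel-verified Lean document; each statement's English description precedes it below -/
import Mathlib

section
/- Let (γ_n) be monotone increasing with γ_0=0. If F ∈ X_γ has exactly one root α in the open unit disc D, with Blaschke decomposition F(z) = ((z−α)/(1−ᾱz))·G(z) where G has no zeros in D, then ‖G‖_{X_γ}^2 = ‖F‖_{X_γ}^2 − (1−|α|^2)·‖G(z)/(1−ᾱz)‖_{Y_γ}^2. -/
noncomputable def xnorm2 (γ : ℕ → ℝ) (a : ℕ → ℂ) : ℝ := ∑' n, γ n * ‖a n‖ ^ 2

noncomputable def ynorm2 (γ : ℕ → ℝ) (a : ℕ → ℂ) : ℝ :=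
  ∑' n, (γ (n + 1) - γ n) * ‖a n‖ ^ 2

def IsCoeffs (a : ℕ → ℂ) (F : ℂ → ℂ) : Prop :=
  ∀ z : ℂ, ‖z‖ < 1 → HasSum (fun n => a n * z ^ n) (F z)

/-!
Write `K = G / (1 - ᾱz) = ∑ kₙ zⁿ`. Since `G = (1 - ᾱz) K` and `F = (z - α) K`, the coefficients
satisfy `gₙ = kₙ - ᾱ kₙ₋₁` and `fₙ = kₙ₋₁ - α kₙ` (with `k₋₁ = 0`), and the identity
`|b - ᾱa|² - |a - αb|² = (1 - |α|²)(|b|² - |a|²)` turns this into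
`|gₙ|² - |fₙ|² = (1 - |α|²)(|kₙ|² - |kₙ₋₁|²)`. Multiplying by `γₙ` and summing by parts leaves
the boundary term `(1 - |α|²) γ_N |k_N|²`. It tends to zero: `k_N = ∑ᵢ αⁱ f_{N+1+i}` and `γ` is
increasing, so `γ_N |k_N|² ≤ sup_{j > N} γⱼ |fⱼ|² / (1 - |α|)²`.
-/

open Filter Finset Topology ComplexConjugate

namespace IsCoeffs

variable {a b : ℕ → ℂ} {F G : ℂ → ℂ}

lemma hasFPowerSeriesOnBall (ha : IsCoeffs a F) :
    HasFPowerSeriesOnBall F (FormalMultilinearSeries.ofScalars ℂ a) 0 1 where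
  r_le := by
    refine ENNReal.le_of_forall_nnreal_lt fun r hr => ?_
    have hr1 : ‖(r : ℂ)‖ < 1 := by simpa using hr
    refine FormalMultilinearSeries.le_radius_of_tendsto _ (l := 0) ?_
    simpa [FormalMultilinearSeries.ofScalars_norm] using
      (ha r hr1).summable.tendsto_atTop_zero.norm
  r_pos := one_pos
  hasSum {y} hy := by
    have hy1 : ‖y‖ < 1 := by simpa [← ofReal_norm, ENNReal.ofReal_lt_one] using hy
    simpa [FormalMultilinearSeries.ofScalars_apply_eq, mul_comm] using ha y hy1

lemma unique (ha : IsCoeffs a F) (hb : IsCoeffs b F) : a = b :=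
  FormalMultilinearSeries.ofScalars_series_injective ℂ ℂ
    (ha.hasFPowerSeriesOnBall.hasFPowerSeriesAt.eq_formalMultilinearSeries
      hb.hasFPowerSeriesOnBall.hasFPowerSeriesAt)

lemma coeff_eq_of_eq_linear_mul (u v : ℂ) (ha : IsCoeffs a F) (hb : IsCoeffs b G)
    (h : ∀ z : ℂ, ‖z‖ < 1 → G z = (u + v * z) * F z) :
    b 0 = u * a 0 ∧ ∀ n, b (n + 1) = u * a (n + 1) + v * a n := by
  set c : ℕ → ℂ := fun n => u * a n + v * if n = 0 then 0 else a (n - 1) with hc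
  have hcG : IsCoeffs c G := by
    intro z hz
    have hshift :
        HasSum (fun n => v * (if n = 0 then 0 else a (n - 1)) * z ^ n) (v * z * F z) := by
      rw [← hasSum_nat_add_iff' 1]
      simp only [Nat.add_one_ne_zero, if_false, Nat.add_sub_cancel, range_one, sum_singleton,
        if_true, mul_zero, zero_mul, sub_zero]
      exact ((ha z hz).mul_left (v * z)).congr_fun fun n => by ring
    rw [h z hz, add_mul]
    exact (((ha z hz).mul_left u).add hshift).congr_fun fun n => by simp only [hc]; ring
  have hbc := hb.unique hcG
  exact ⟨by simp [hbc, hc], fun n => by simp [hbc, hc]⟩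

end IsCoeffs

section Telescoping

variable {𝕜 : Type*} [NormedField 𝕜] {α : 𝕜} {x y : ℕ → 𝕜}

lemma tendsto_pow_mul_comp_add (h : Tendsto (fun m => α ^ m * x m) atTop (𝓝 0)) (n : ℕ) :
    Tendsto (fun m => α ^ m * x (n + m)) atTop (𝓝 0) := by
  rcases eq_or_ne α 0 with rfl | hα
  · refine tendsto_const_nhds.congr' ?_
    filter_upwards [eventually_ge_atTop 1] with m hm
    simp [zero_pow (Nat.one_le_iff_ne_zero.mp hm)]
  · have := ((tendsto_add_atTop_iff_nat n).2 h).const_mul (α ^ n)⁻¹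
    rw [mul_zero] at this
    refine this.congr fun m => ?_
    rw [add_comm m n, pow_add, mul_assoc, inv_mul_cancel_left₀ (pow_ne_zero n hα)]

lemma eq_sum_range_pow_mul_add (h : ∀ n, y n = x n - α * x (n + 1)) (m : ℕ) :
    x 0 = ∑ i ∈ range m, α ^ i * y i + α ^ m * x m := by
  induction m with
  | zero => simp
  | succ m ih => rw [ih, sum_range_succ, h m, pow_succ]; ring

lemma norm_le_div_of_eq_sub_mul_succ (hα : ‖α‖ < 1) (h : ∀ n, y n = x n - α * x (n + 1))
    (hx : Tendsto (fun m => α ^ m * x m) atTop (𝓝 0)) {ε : ℝ} (hy : ∀ n, ‖y n‖ ≤ ε) :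
    ‖x 0‖ ≤ ε / (1 - ‖α‖) := by
  have hε : 0 ≤ ε := (norm_nonneg _).trans (hy 0)
  have hbound : ∀ m, ‖x 0‖ ≤ ε / (1 - ‖α‖) + ‖α ^ m * x m‖ := fun m => by
    calc ‖x 0‖ ≤ ∑ i ∈ range m, ‖α‖ ^ i * ε + ‖α ^ m * x m‖ := by
          rw [eq_sum_range_pow_mul_add h m]
          refine (norm_add_le _ _).trans (add_le_add_left ((norm_sum_le _ _).trans ?_) _)
          exact sum_le_sum fun i _ => by
            rw [norm_mul, norm_pow]; exact mul_le_mul_of_nonneg_left (hy i) (by positivity)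
      _ ≤ ε / (1 - ‖α‖) + ‖α ^ m * x m‖ := by
          rw [← sum_mul, range_eq_Ico, mul_comm, ← mul_one_div ε]
          gcongr
          simpa using geom_sum_Ico_le_of_lt_one (m := 0) (norm_nonneg α) hα
  have hlim := (tendsto_const_nhds (x := ε / (1 - ‖α‖))).add hx.norm
  rw [norm_zero, add_zero] at hlim
  exact ge_of_tendsto' hlim hbound

end Telescoping

section BlaschkeFactor

variable {γ : ℕ → ℝ} {α : ℂ} {f g k : ℕ → ℂ}

lemma tendsto_mul_norm_sq_of_eq_sub_mul_succ (hmono : Monotone γ) (hγ : ∀ n, 0 ≤ γ n)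
    (hα : ‖α‖ < 1) (hf : ∀ n, f (n + 1) = k n - α * k (n + 1))
    (hk : Tendsto (fun m => α ^ m * k m) atTop (𝓝 0))
    (hfγ : Tendsto (fun n => γ n * ‖f n‖ ^ 2) atTop (𝓝 0)) :
    Tendsto (fun n => γ n * ‖k n‖ ^ 2) atTop (𝓝 0) := by
  have hα1 : 0 < 1 - ‖α‖ := sub_pos.2 hα
  have hbound : ∀ δ > 0, ∀ᶠ n in atTop, γ n * ‖k n‖ ^ 2 ≤ δ / (1 - ‖α‖) ^ 2 := by
    intro δ hδ
    obtain ⟨J, hJ⟩ := eventually_atTop.1 (hfγ.eventually (ge_mem_nhds hδ))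
    filter_upwards [eventually_ge_atTop J] with n hn
    set s := Real.sqrt (γ n)
    have hsk : ‖(s : ℂ) * k n‖ ≤ Real.sqrt δ / (1 - ‖α‖) := by
      refine norm_le_div_of_eq_sub_mul_succ (x := fun i => (s : ℂ) * k (n + i))
        (y := fun i => (s : ℂ) * f (n + 1 + i)) hα (fun i => ?_) ?_ (fun i => ?_)
      · rw [show n + 1 + i = n + i + 1 by omega, hf, ← add_assoc]
        ring
      · simpa [mul_left_comm] using (tendsto_pow_mul_comp_add hk n).const_mul (s : ℂ)
      · rw [norm_mul, Complex.norm_real, Real.norm_of_nonneg (Real.sqrt_nonneg _),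
          Real.le_sqrt (by positivity) hδ.le, mul_pow, Real.sq_sqrt (hγ n)]
        calc γ n * ‖f (n + 1 + i)‖ ^ 2 ≤ γ (n + 1 + i) * ‖f (n + 1 + i)‖ ^ 2 := by
              gcongr; exact hmono (by omega)
          _ ≤ δ := hJ _ (by omega)
    calc γ n * ‖k n‖ ^ 2 = ‖(s : ℂ) * k n‖ ^ 2 := by
          rw [norm_mul, Complex.norm_real, Real.norm_of_nonneg (Real.sqrt_nonneg _), mul_pow,
            Real.sq_sqrt (hγ n)]
      _ ≤ (Real.sqrt δ / (1 - ‖α‖)) ^ 2 := by gcongr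
      _ = δ / (1 - ‖α‖) ^ 2 := by rw [div_pow, Real.sq_sqrt hδ.le]
  refine tendsto_order.2
    ⟨fun a ha => Eventually.of_forall fun n => ha.trans_le (mul_nonneg (hγ n) (sq_nonneg _)),
      fun a ha => ?_⟩
  filter_upwards [hbound (a * (1 - ‖α‖) ^ 2 / 2) (by positivity)] with n hn
  refine hn.trans_lt ?_
  field_simp
  linarith

lemma norm_sub_conj_mul_sq_sub_norm_sub_mul_sq (α a b : ℂ) :
    ‖b - conj α * a‖ ^ 2 - ‖a - α * b‖ ^ 2 = (1 - ‖α‖ ^ 2) * (‖b‖ ^ 2 - ‖a‖ ^ 2) := by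
  simp only [Complex.sq_norm, Complex.normSq_apply, Complex.sub_re, Complex.sub_im,
    Complex.mul_re, Complex.mul_im, Complex.conj_re, Complex.conj_im]
  ring

lemma sum_range_mul_norm_sq_add_eq (hg0 : g 0 = k 0)
    (hg : ∀ n, g (n + 1) = k (n + 1) - conj α * k n) (hf0 : f 0 = -(α * k 0))
    (hf : ∀ n, f (n + 1) = k n - α * k (n + 1)) (N : ℕ) :
    ∑ n ∈ range (N + 1), γ n * ‖g n‖ ^ 2
        + (1 - ‖α‖ ^ 2) * ∑ n ∈ range N, (γ (n + 1) - γ n) * ‖k n‖ ^ 2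
      = ∑ n ∈ range (N + 1), γ n * ‖f n‖ ^ 2 + (1 - ‖α‖ ^ 2) * (γ N * ‖k N‖ ^ 2) := by
  induction N with
  | zero => simp [hg0, hf0]; ring
  | succ N ih =>
    rw [sum_range_succ (fun n => γ n * ‖g n‖ ^ 2), sum_range_succ (fun n => γ n * ‖f n‖ ^ 2),
      sum_range_succ (fun n => (γ (n + 1) - γ n) * ‖k n‖ ^ 2), hg, hf]
    linear_combination
      ih + γ (N + 1) * norm_sub_conj_mul_sq_sub_norm_sub_mul_sq α (k N) (k (N + 1))

end BlaschkeFactor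

lemma summable_and_tsum_eq_of_sum_range_add_eq {a b p e : ℕ → ℝ} {c : ℝ} (hc : 0 < c)
    (ha : ∀ n, 0 ≤ a n) (hb : ∀ n, 0 ≤ b n) (hp : Summable p)
    (he : Tendsto e atTop (𝓝 0))
    (h : ∀ N, ∑ n ∈ range (N + 1), a n + c * ∑ n ∈ range N, b n
      = ∑ n ∈ range (N + 1), p n + c * e N) :
    Summable a ∧ Summable b ∧ ∑' n, a n = ∑' n, p n - c * ∑' n, b n := by
  have hpN := hp.hasSum.tendsto_sum_nat
  obtain ⟨P, hP⟩ := hpN.bddAbove_range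
  obtain ⟨E, hE⟩ := he.bddAbove_range
  have hbs : Summable b := by
    refine summable_of_sum_range_le hb (c := (P + c * E) / c) fun N => ?_
    rw [le_div_iff₀' hc]
    have hpP := hP (Set.mem_range_self (N + 1))
    have heE := hE (Set.mem_range_self N)
    have ha0 : 0 ≤ ∑ n ∈ range (N + 1), a n := sum_nonneg fun n _ => ha n
    nlinarith [h N]
  have hlim : Tendsto (fun N => ∑ n ∈ range (N + 1), a n) atTop
      (𝓝 (∑' n, p n - c * ∑' n, b n)) := by
    have := (((tendsto_add_atTop_iff_nat 1).2 hpN).add (he.const_mul c)).sub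
      (hbs.hasSum.tendsto_sum_nat.const_mul c)
    rw [mul_zero, add_zero] at this
    exact this.congr fun N => by linarith [h N]
  have has := (hasSum_iff_tendsto_nat_of_nonneg ha _).2 ((tendsto_add_atTop_iff_nat 1).1 hlim)
  exact ⟨has.summable, hbs, has.tsum_eq⟩

theorem stmt2_general (γ : ℕ → ℝ) (hmono : Monotone γ) (h0 : γ 0 = 0)
    (F G : ℂ → ℂ) (f g k : ℕ → ℂ) (α : ℂ) (hα : ‖α‖ < 1)
    (hf : IsCoeffs f F) (hg : IsCoeffs g G)
    (hk : ∀ z : ℂ, ‖z‖ < 1 →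
      HasSum (fun n => k n * z ^ n) (G z / (1 - (starRingEnd ℂ) α * z)))
    (hfac : ∀ z : ℂ, ‖z‖ < 1 →
      F z = (z - α) / (1 - (starRingEnd ℂ) α * z) * G z)
    (hX : Summable fun n => γ n * ‖f n‖ ^ 2) :
    (Summable fun n => γ n * ‖g n‖ ^ 2) ∧
      (Summable fun n => (γ (n + 1) - γ n) * ‖k n‖ ^ 2) ∧
      xnorm2 γ g = xnorm2 γ f - (1 - ‖α‖ ^ 2) * ynorm2 γ k := by
  have hγ : ∀ n, 0 ≤ γ n := fun n => h0 ▸ hmono n.zero_le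
  have hK : IsCoeffs k fun z => G z / (1 - conj α * z) := hk
  have hden : ∀ z : ℂ, ‖z‖ < 1 → 1 - conj α * z ≠ 0 := fun z hz h => by
    have := congrArg norm (sub_eq_zero.1 h)
    rw [norm_one, norm_mul, Complex.norm_conj] at this
    nlinarith [norm_nonneg α, norm_nonneg z]
  obtain ⟨hg0, hgs⟩ := hK.coeff_eq_of_eq_linear_mul 1 (-conj α) hg fun z hz => by
    field_simp [hden z hz]; ring
  obtain ⟨hf0, hfs⟩ := hK.coeff_eq_of_eq_linear_mul (-α) 1 hf fun z hz => by
    rw [hfac z hz]; field_simp [hden z hz]; ring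
  have hfk : ∀ n, f (n + 1) = k n - α * k (n + 1) := fun n => by rw [hfs]; ring
  have hdecay := tendsto_mul_norm_sq_of_eq_sub_mul_succ hmono hγ hα hfk
    (by simpa [mul_comm] using (hk α hα).summable.tendsto_atTop_zero) hX.tendsto_atTop_zero
  exact summable_and_tsum_eq_of_sum_range_add_eq (by nlinarith [norm_nonneg α])
    (fun n => mul_nonneg (hγ n) (sq_nonneg _))
    (fun n => mul_nonneg (sub_nonneg.2 (hmono n.le_succ)) (sq_nonneg _)) hX hdecay
    (sum_range_mul_norm_sq_add_eq (by simpa using hg0) (fun n => by rw [hgs]; ring)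
      (by simpa using hf0) hfk)

/-- Single-root Blaschke decomposition: if `F ∈ X_γ` has a single root `α` in `𝔻`,
with `F = ((z-α)/(1-ᾱz))·G`, `G` zero-free in `𝔻`, then
`‖G‖_{X_γ}² = ‖F‖_{X_γ}² - (1-|α|²)‖G/(1-ᾱ·)‖_{Y_γ}²`. -/
theorem stmt2 (γ : ℕ → ℝ) (hmono : Monotone γ) (h0 : γ 0 = 0)
    (F G : ℂ → ℂ) (f g k : ℕ → ℂ) (α : ℂ) (hα : ‖α‖ < 1)
    (hf : IsCoeffs f F) (hg : IsCoeffs g G)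
    (hk : ∀ z : ℂ, ‖z‖ < 1 →
      HasSum (fun n => k n * z ^ n) (G z / (1 - (starRingEnd ℂ) α * z)))
    (hG0 : ∀ z : ℂ, ‖z‖ < 1 → G z ≠ 0)
    (hfac : ∀ z : ℂ, ‖z‖ < 1 →
      F z = (z - α) / (1 - (starRingEnd ℂ) α * z) * G z)
    (hH2 : Summable fun n => ‖f n‖ ^ 2)
    (hX : Summable fun n => γ n * ‖f n‖ ^ 2) :
    (Summable fun n => γ n * ‖g n‖ ^ 2) ∧
      (Summable fun n => (γ (n + 1) - γ n) * ‖k n‖ ^ 2) ∧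
      xnorm2 γ g = xnorm2 γ f - (1 - ‖α‖ ^ 2) * ynorm2 γ k :=
  stmt2_general γ hmono h0 F G f g k α hα hf hg hk hfac hX
end

section
/- Let (γ_n) be monotone increasing with γ_0=0 and suppose Γ_n = γ_{n+1}−γ_n is monotone decreasing (γ_{n+2}−2γ_{n+1}+γ_n ≤ 0). If F ∈ X_γ has finitely many zeros α_1,…,α_m in D with Blaschke decomposition F = B·G, then ‖G‖_{X_γ}^2 ≤ ‖F‖_{X_γ}^2 − Σ_{j=1}^m (1−|α_j|^2)·‖F(e^{i·})/(e^{i·}−α_j)‖_{Y_γ}^2. -/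
/-! With `b_α z = (z - α) / (1 - conj α * z)`, the maps `h ↦ (1 - conj α z) h` and
`h ↦ (z - α) h` act on Taylor coefficients `k` by `c n = k n - conj α * k (n - 1)` and
`d n = k (n - 1) - α * k n`. Pointwise `|d n|² - |c n|² = (1 - |α|²)(|k (n-1)|² - |k n|²)`, so
summation by parts against `γ` gives
`‖(z - α) h‖_X² = ‖(1 - conj α z) h‖_X² + (1 - |α|²) ‖h‖_Y²`.
The boundary term `γ N |k N|²` tends to `0` because `k n = ∑ αⁱ d (n + i + 1)` and `γ` is
increasing. Taking `h = B_{j-1} G / (1 - conj α_j z)` for `j = m, …, 1` peels the zeros off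
`F = B_m G` one at a time:
`‖F‖_X² = ‖G‖_X² + ∑ⱼ (1 - |α_j|²) ‖B_{j-1} G / (1 - conj α_j z)‖_Y²`.
Finally `F / (z - α_j)` is the `j`-th of these quotients times the factors `b_{α_i}`, `i > j`,
and multiplying by `b_α` does not increase `‖·‖_Y` when `γ (n+1) - γ n` decreases: with
constant weight the identity says that the partial sums of `|b_α c|²` are dominated by those
of `|c|²`, and Abel summation passes this to any decreasing weight. -/

open Finset

open Filter Topology ComplexConjugate

-- Coefficients of `z K`, `(z - α) K`, `(1 - conj α z) K`, `C / (1 - conj α z)`, `b_α C`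
-- and `b_{α 1} ⋯ b_{α t} C`, where `K` and `C` have coefficients `k` and `c`.
def mulZ (k : ℕ → ℂ) : ℕ → ℂ
  | 0 => 0
  | n + 1 => k n

def mulZSub (α : ℂ) (k : ℕ → ℂ) (n : ℕ) : ℂ := mulZ k n - α * k n

def oneSubMul (α : ℂ) (k : ℕ → ℂ) (n : ℕ) : ℂ := k n - conj α * mulZ k n

def divOneSub (α : ℂ) (c : ℕ → ℂ) (n : ℕ) : ℂ :=
  ∑ i ∈ range (n + 1), conj α ^ (n - i) * c i

def blaschkeMul (α : ℂ) (c : ℕ → ℂ) : ℕ → ℂ := mulZSub α (divOneSub α c)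

def blaschkeChain (α : ℕ → ℂ) (c : ℕ → ℂ) : ℕ → ℕ → ℂ
  | 0 => c
  | t + 1 => blaschkeMul (α (t + 1)) (blaschkeChain α c t)

noncomputable def blaschkeFactor (α z : ℂ) : ℂ := (z - α) / (1 - conj α * z)

section Coefficients

variable (α : ℂ) (c k : ℕ → ℂ)

lemma divOneSub_succ (n : ℕ) :
    divOneSub α c (n + 1) = conj α * divOneSub α c n + c (n + 1) := by
  rw [divOneSub, sum_range_succ, Nat.sub_self, pow_zero, one_mul, divOneSub, mul_sum]
  congr 1
  refine sum_congr rfl fun i hi => ?_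
  rw [← mul_assoc, ← pow_succ', Nat.sub_add_comm (mem_range_succ_iff.1 hi)]

@[simp]
lemma oneSubMul_divOneSub : oneSubMul α (divOneSub α c) = c := by
  ext (_ | n)
  · simp [oneSubMul, divOneSub, mulZ]
  · rw [oneSubMul, mulZ, divOneSub_succ]; ring

lemma norm_sq_mulZSub_sub_norm_sq_oneSubMul (n : ℕ) :
    ‖mulZSub α k n‖ ^ 2 - ‖oneSubMul α k n‖ ^ 2
      = (1 - ‖α‖ ^ 2) * (‖mulZ k n‖ ^ 2 - ‖k n‖ ^ 2) := by
  simp only [mulZSub, oneSubMul, ← Complex.normSq_eq_norm_sq, Complex.normSq_apply,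
    Complex.sub_re, Complex.sub_im, Complex.mul_re, Complex.mul_im, Complex.conj_re,
    Complex.conj_im]
  ring

lemma sum_range_succ_mul_norm_sq_mulZ_sub (w : ℕ → ℝ) (N : ℕ) :
    ∑ n ∈ range (N + 1), w n * (‖mulZ k n‖ ^ 2 - ‖k n‖ ^ 2)
      = ∑ n ∈ range N, (w (n + 1) - w n) * ‖k n‖ ^ 2 - w N * ‖k N‖ ^ 2 := by
  induction N with
  | zero => simp [mulZ]
  | succ N ih => rw [sum_range_succ, ih, sum_range_succ, mulZ]; ring

lemma sum_range_succ_mul_norm_sq_mulZSub_sub (w : ℕ → ℝ) (N : ℕ) :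
    ∑ n ∈ range (N + 1), w n * ‖mulZSub α k n‖ ^ 2
        - ∑ n ∈ range (N + 1), w n * ‖oneSubMul α k n‖ ^ 2
      = (1 - ‖α‖ ^ 2)
          * (∑ n ∈ range N, (w (n + 1) - w n) * ‖k n‖ ^ 2 - w N * ‖k N‖ ^ 2) := by
  rw [← sum_range_succ_mul_norm_sq_mulZ_sub, ← sum_sub_distrib, mul_sum]
  refine sum_congr rfl fun n _ => ?_
  rw [← mul_sub, norm_sq_mulZSub_sub_norm_sq_oneSubMul]
  ring

lemma sum_range_norm_sq_blaschkeMul_le {α : ℂ} (hα : ‖α‖ ≤ 1) (N : ℕ) :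
    ∑ n ∈ range N, ‖blaschkeMul α c n‖ ^ 2 ≤ ∑ n ∈ range N, ‖c n‖ ^ 2 := by
  rcases N with _ | N
  · simp
  have h := sum_range_succ_mul_norm_sq_mulZSub_sub α (divOneSub α c) (fun _ => 1) N
  simp only [oneSubMul_divOneSub, one_mul, sub_self, zero_mul, sum_const_zero, zero_sub] at h
  have : 0 ≤ 1 - ‖α‖ ^ 2 := by nlinarith [norm_nonneg α]
  rw [blaschkeMul]
  nlinarith [sq_nonneg ‖divOneSub α c N‖]

end Coefficients

lemma one_sub_conj_mul_ne_zero {α z : ℂ} (hα : ‖α‖ ≤ 1) (hz : ‖z‖ < 1) :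
    1 - conj α * z ≠ 0 := by
  refine sub_ne_zero.2 fun h => ?_
  have : ‖conj α * z‖ < 1 := by
    rw [norm_mul, Complex.norm_conj]; nlinarith [norm_nonneg α, norm_nonneg z]
  rw [← h, norm_one] at this
  exact lt_irrefl _ this

lemma summable_norm_mul_pow_of_tendsto {c : ℕ → ℂ} {z w : ℂ} (hzw : ‖z‖ < ‖w‖)
    (h : Tendsto (fun n => c n * w ^ n) atTop (𝓝 0)) :
    Summable fun n => ‖c n * z ^ n‖ := by
  have hw : 0 < ‖w‖ := (norm_nonneg z).trans_lt hzw
  obtain ⟨C, hC⟩ := h.norm.bddAbove_range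
  refine ((summable_geometric_of_lt_one (by positivity) ((div_lt_one hw).2 hzw)).mul_left C
    ).of_nonneg_of_le (fun n => norm_nonneg _) fun n => ?_
  have hn : ‖c n * z ^ n‖ = ‖c n * w ^ n‖ * (‖z‖ / ‖w‖) ^ n := by
    rw [norm_mul, norm_mul, norm_pow, norm_pow, div_pow]
    field_simp
  rw [hn]
  exact mul_le_mul_of_nonneg_right (hC ⟨n, rfl⟩) (by positivity)

namespace IsCoeffs

variable {c k : ℕ → ℂ} {C K : ℂ → ℂ}

lemma summable_norm (hc : IsCoeffs c C) {z : ℂ} (hz : ‖z‖ < 1) :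
    Summable fun n => ‖c n * z ^ n‖ := by
  obtain ⟨ρ, hzρ, hρ1⟩ := exists_between hz
  have hρ : ‖(ρ : ℂ)‖ = ρ := by simp [abs_of_pos ((norm_nonneg z).trans_lt hzρ)]
  exact summable_norm_mul_pow_of_tendsto (by rwa [hρ])
    (hc ρ (by rwa [hρ])).summable.tendsto_atTop_zero

lemma tendsto_pow_mul_add (hk : IsCoeffs k K) {α : ℂ} (hα : ‖α‖ < 1) (n : ℕ) :
    Tendsto (fun M => α ^ M * k (n + M)) atTop (𝓝 0) := by
  obtain ⟨ρ, hαρ, hρ1⟩ := exists_between hα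
  have hρ : 0 < ρ := (norm_nonneg α).trans_lt hαρ
  have hρ' : ‖(ρ : ℂ)‖ = ρ := by simp [abs_of_pos hρ]
  have hterms : Tendsto (fun M => k (n + M) * (ρ : ℂ) ^ (n + M)) atTop (𝓝 0) :=
    (hk ρ (by rwa [hρ'])).summable.tendsto_atTop_zero.comp
      (tendsto_atTop_atTop.2 fun b => ⟨b, fun _ h => by omega⟩)
  have hgeom : Tendsto (fun M => (α / ρ) ^ M) atTop (𝓝 0) :=
    tendsto_pow_atTop_nhds_zero_of_norm_lt_one (by rwa [norm_div, hρ', div_lt_one hρ])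
  have hρ0 : (ρ : ℂ) ≠ 0 := by exact_mod_cast hρ.ne'
  simpa using ((hgeom.mul hterms).const_mul ((ρ : ℂ) ^ n)⁻¹).congr fun M => by
    rw [div_pow, pow_add]; field_simp

lemma mulZSub (hk : IsCoeffs k K) (α : ℂ) :
    IsCoeffs (mulZSub α k) fun z => (z - α) * K z := by
  intro z hz
  have hshift : HasSum (fun n => mulZ k n * z ^ n) (z * K z) := by
    refine (hasSum_nat_add_iff' 1).1 ?_
    simpa [mulZ, pow_succ, mul_comm, mul_left_comm] using (hk z hz).mul_left z
  simpa [_root_.mulZSub, sub_mul, mul_assoc] using hshift.sub ((hk z hz).mul_left α)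

lemma divOneSub (hc : IsCoeffs c C) {α : ℂ} (hα : ‖α‖ ≤ 1) :
    IsCoeffs (divOneSub α c) fun z => C z / (1 - conj α * z) := by
  intro z hz
  set q := conj α * z
  have hq : ‖q‖ < 1 := by
    rw [norm_mul, Complex.norm_conj]; nlinarith [norm_nonneg α, norm_nonneg z]
  have hgeom : Summable fun n => ‖q ^ n‖ := by
    simpa [norm_pow] using summable_geometric_of_lt_one (norm_nonneg q) hq
  have hconv : ∀ n, ∑ i ∈ range (n + 1), c i * z ^ i * q ^ (n - i)
      = _root_.divOneSub α c n * z ^ n := fun n => by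
    rw [_root_.divOneSub, sum_mul]
    refine sum_congr rfl fun i hi => ?_
    rw [mul_pow, ← Nat.add_sub_cancel' (mem_range_succ_iff.1 hi)]
    simp only [Nat.add_sub_cancel_left, pow_add]
    ring
  have hsum := (summable_norm_sum_mul_range_of_summable_norm (hc.summable_norm hz) hgeom).of_norm
  have htsum := tsum_mul_tsum_eq_tsum_sum_range_of_summable_norm (hc.summable_norm hz) hgeom
  rw [(hc z hz).tsum_eq, tsum_geometric_of_norm_lt_one hq] at htsum
  simp only [hconv] at hsum htsum
  show HasSum _ (C z / (1 - q))
  rw [div_eq_mul_inv, htsum]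
  exact hsum.hasSum

lemma blaschkeMul (hc : IsCoeffs c C) {α : ℂ} (hα : ‖α‖ ≤ 1) :
    IsCoeffs (blaschkeMul α c) fun z => blaschkeFactor α z * C z := fun z hz => by
  show HasSum (fun n => _root_.mulZSub α (_root_.divOneSub α c) n * z ^ n) _
  convert (hc.divOneSub hα).mulZSub α z hz using 1
  simp only [blaschkeFactor]; ring

lemma blaschkeChain (hc : IsCoeffs c C) {α : ℕ → ℂ} {t : ℕ}
    (hα : ∀ i ∈ Icc 1 t, ‖α i‖ ≤ 1) :
    IsCoeffs (blaschkeChain α c t)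
      fun z => (∏ i ∈ Icc 1 t, blaschkeFactor (α i) z) * C z := by
  induction t with
  | zero => simpa [_root_.blaschkeChain] using hc
  | succ t ih =>
    intro z hz
    show HasSum (fun n => _root_.blaschkeMul (α (t + 1)) (_root_.blaschkeChain α c t) n * z ^ n) _
    convert (ih fun i hi => hα i (Icc_subset_Icc_right t.le_succ hi)).blaschkeMul
      (hα (t + 1) (right_mem_Icc.2 (by omega))) z hz using 1
    beta_reduce
    rw [prod_Icc_succ_top (by omega)]; ring

end IsCoeffs

theorem coeffs_eq_of_hasSum {a b : ℕ → ℂ} {H : ℂ → ℂ} (β : ℂ)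
    (ha : ∀ z : ℂ, ‖z‖ < 1 → z ≠ β → HasSum (fun n => a n * z ^ n) (H z))
    (hb : ∀ z : ℂ, ‖z‖ < 1 → z ≠ β → HasSum (fun n => b n * z ^ n) (H z)) :
    a = b := by
  set p := FormalMultilinearSeries.ofScalars ℂ (a - b)
  have hzero : ∀ z : ℂ, ‖z‖ < 1 → z ≠ β → HasSum (fun n => (a - b) n * z ^ n) 0 := by
    intro z hz hβ
    simpa [sub_mul] using (ha z hz hβ).sub (hb z hz hβ)
  obtain ⟨z₀, hz₀, hz₀β⟩ : ∃ z₀ : ℂ, ‖z₀‖ = 1 / 2 ∧ z₀ ≠ β := by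
    by_cases h : (1 / 2 : ℂ) = β
    · exact ⟨-1 / 2, by norm_num, fun h' => by rw [← h] at h'; norm_num at h'⟩
    · exact ⟨1 / 2, by norm_num, h⟩
  have hrad : 0 < p.radius := by
    refine lt_of_lt_of_le ?_ (p.le_radius_of_tendsto (r := ‖z₀‖₊) (l := 0) ?_)
    · simp [← NNReal.coe_pos, hz₀]
    · simpa [p, FormalMultilinearSeries.ofScalars_norm, hz₀] using
        (hzero z₀ (by rw [hz₀]; norm_num) hz₀β).summable.tendsto_atTop_zero.norm
  have hp := (p.hasFPowerSeriesOnBall hrad).hasFPowerSeriesAt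
  have hsum_zero : ∀ᶠ z in 𝓝[≠] 0, p.sum z = 0 := by
    have hβ : ∀ᶠ z in 𝓝[≠] (0 : ℂ), z ≠ β := by
      rcases eq_or_ne β 0 with rfl | hβ
      · exact self_mem_nhdsWithin
      · exact nhdsWithin_le_nhds (isOpen_ne.mem_nhds hβ.symm)
    have h1 : ∀ᶠ z in 𝓝[≠] (0 : ℂ), ‖z‖ < 1 :=
      nhdsWithin_le_nhds ((isOpen_lt continuous_norm continuous_const).mem_nhds (by simp))
    filter_upwards [hβ, h1] with z hzβ hz1
    simpa [FormalMultilinearSeries.sum, p, FormalMultilinearSeries.ofScalars_apply_eq, mul_comm]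
      using (hzero z hz1 hzβ).tsum_eq
  have hp0 : p = 0 := hp.locally_zero_iff.1
    (hp.analyticAt.frequently_zero_iff_eventually_zero.1 hsum_zero.frequently)
  exact sub_eq_zero.1 ((FormalMultilinearSeries.ofScalars_series_eq_zero ℂ).1 hp0)

section Energy

variable {α : ℂ} {k : ℕ → ℂ}

lemma tendsto_sum_range_pow_mul_mulZSub {n : ℕ}
    (hk : Tendsto (fun M => α ^ M * k (n + M)) atTop (𝓝 0)) :
    Tendsto (fun M => ∑ i ∈ range M, α ^ i * mulZSub α k (n + i + 1)) atTop (𝓝 (k n)) := by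
  have htel : ∀ M, ∑ i ∈ range M, α ^ i * mulZSub α k (n + i + 1)
      = k n - α ^ M * k (n + M) := fun M => by
    rw [show k n = α ^ 0 * k (n + 0) by simp, ← sum_range_sub' (fun i => α ^ i * k (n + i))]
    refine sum_congr rfl fun i _ => ?_
    rw [mulZSub, mulZ, pow_succ]
    ring_nf
  simpa [htel] using tendsto_const_nhds.sub hk

lemma tendsto_tsum_pow_mul_add {r : ℝ} (hr0 : 0 ≤ r) (hr : r < 1) {u : ℕ → ℝ}
    (hu : Tendsto u atTop (𝓝 0)) :
    Tendsto (fun n => ∑' i, r ^ i * u (n + i)) atTop (𝓝 0) := by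
  obtain ⟨B, hB⟩ := hu.norm.bddAbove_range
  simpa using tendsto_tsum_of_dominated_convergence (𝓕 := atTop)
    (f := fun n i => r ^ i * u (n + i)) (g := fun _ => 0)
    ((summable_geometric_of_lt_one hr0 hr).mul_right B)
    (fun i => by simpa using (hu.comp (tendsto_add_atTop_nat i)).const_mul (r ^ i))
    (Eventually.of_forall fun n i => by
      rw [norm_mul, norm_pow, Real.norm_of_nonneg hr0]
      exact mul_le_mul_of_nonneg_left (hB ⟨_, rfl⟩) (by positivity))

lemma tendsto_mul_norm_of_tendsto_mul_norm_mulZSub {v : ℕ → ℝ} (hv : Monotone v)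
    (hv0 : 0 ≤ v 0) (hα : ‖α‖ < 1)
    (hk : ∀ n, Tendsto (fun M => α ^ M * k (n + M)) atTop (𝓝 0))
    (hd : Tendsto (fun n => v n * ‖mulZSub α k n‖) atTop (𝓝 0)) :
    Tendsto (fun n => v n * ‖k n‖) atTop (𝓝 0) := by
  set u := fun n => v (n + 1) * ‖mulZSub α k (n + 1)‖
  have hv' : ∀ n, 0 ≤ v n := fun n => hv0.trans (hv n.zero_le)
  have hu0 : ∀ n, 0 ≤ u n := fun n => mul_nonneg (hv' _) (norm_nonneg _)
  obtain ⟨B, hB⟩ := (hd.comp (tendsto_add_atTop_nat 1)).bddAbove_range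
  have hsum : ∀ n, Summable fun i => ‖α‖ ^ i * u (n + i) := fun n =>
    ((summable_geometric_of_lt_one (norm_nonneg α) hα).mul_right B).of_nonneg_of_le
      (fun i => mul_nonneg (by positivity) (hu0 _))
      fun i => mul_le_mul_of_nonneg_left (hB ⟨_, rfl⟩) (by positivity)
  have hbound : ∀ n, v n * ‖k n‖ ≤ ∑' i, ‖α‖ ^ i * u (n + i) := by
    intro n
    refine le_of_tendsto ((tendsto_sum_range_pow_mul_mulZSub (hk n)).norm.const_mul (v n))
      (Eventually.of_forall fun M => ?_)
    refine (mul_le_mul_of_nonneg_left (norm_sum_le _ _) (hv' n)).trans ?_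
    rw [mul_sum]
    refine (sum_le_sum fun i _ => ?_).trans
      ((hsum n).sum_le_tsum _ fun i _ => mul_nonneg (by positivity) (hu0 _))
    rw [norm_mul, norm_pow, mul_left_comm]
    exact mul_le_mul_of_nonneg_left
      (mul_le_mul_of_nonneg_right (hv (by omega)) (norm_nonneg _)) (by positivity)
  exact squeeze_zero (fun n => mul_nonneg (hv' n) (norm_nonneg _)) hbound
    (tendsto_tsum_pow_mul_add (norm_nonneg α) hα (hd.comp (tendsto_add_atTop_nat 1)))

lemma tendsto_mul_norm_sq_of_summable_mulZSub {w : ℕ → ℝ} (hw : Monotone w)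
    (hw0 : 0 ≤ w 0) (hα : ‖α‖ < 1)
    (hk : ∀ n, Tendsto (fun M => α ^ M * k (n + M)) atTop (𝓝 0))
    (hd : Summable fun n => w n * ‖mulZSub α k n‖ ^ 2) :
    Tendsto (fun n => w n * ‖k n‖ ^ 2) atTop (𝓝 0) := by
  have hw' : ∀ n, 0 ≤ w n := fun n => hw0.trans (hw n.zero_le)
  have hsqrt : ∀ (n : ℕ) (a : ℂ), Real.sqrt (w n * ‖a‖ ^ 2) = Real.sqrt (w n) * ‖a‖ :=
    fun n a => by rw [Real.sqrt_mul (hw' n), Real.sqrt_sq (norm_nonneg a)]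
  have hd' : Tendsto (fun n => Real.sqrt (w n) * ‖mulZSub α k n‖) atTop (𝓝 0) := by
    have := (Real.continuous_sqrt.tendsto 0).comp hd.tendsto_atTop_zero
    rw [Real.sqrt_zero] at this
    exact this.congr fun n => hsqrt n _
  have := (tendsto_mul_norm_of_tendsto_mul_norm_mulZSub (fun _ _ h => Real.sqrt_le_sqrt (hw h))
    (Real.sqrt_nonneg _) hα hk hd').pow 2
  simpa [mul_pow, Real.sq_sqrt (hw' _)] using this

theorem summable_xnorm2_oneSubMul_add_ynorm2 {w : ℕ → ℝ} (hw : Monotone w) (hw0 : 0 ≤ w 0)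
    (hα : ‖α‖ < 1) (hk : ∀ n, Tendsto (fun M => α ^ M * k (n + M)) atTop (𝓝 0))
    (hd : Summable fun n => w n * ‖mulZSub α k n‖ ^ 2) :
    Summable (fun n => w n * ‖oneSubMul α k n‖ ^ 2)
      ∧ Summable (fun n => (w (n + 1) - w n) * ‖k n‖ ^ 2)
      ∧ xnorm2 w (oneSubMul α k) + (1 - ‖α‖ ^ 2) * ynorm2 w k
          = xnorm2 w (mulZSub α k) := by
  have hw' : ∀ n, 0 ≤ w n := fun n => hw0.trans (hw n.zero_le)
  have hr : 0 < 1 - ‖α‖ ^ 2 := by nlinarith [norm_nonneg α]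
  set A := fun N => ∑ n ∈ range N, w n * ‖oneSubMul α k n‖ ^ 2
  set B := fun N => ∑ n ∈ range N, (w (n + 1) - w n) * ‖k n‖ ^ 2
  have hA : ∀ n, 0 ≤ w n * ‖oneSubMul α k n‖ ^ 2 :=
    fun n => mul_nonneg (hw' n) (by positivity)
  have hB : ∀ n, 0 ≤ (w (n + 1) - w n) * ‖k n‖ ^ 2 :=
    fun n => mul_nonneg (sub_nonneg.2 (hw n.le_succ)) (by positivity)
  have hlim : Tendsto (fun N => A (N + 1) + (1 - ‖α‖ ^ 2) * B N) atTop
      (𝓝 (xnorm2 w (mulZSub α k))) := by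
    have := (hd.hasSum.tendsto_sum_nat.comp (tendsto_add_atTop_nat 1)).add
      ((tendsto_mul_norm_sq_of_summable_mulZSub hw hw0 hα hk hd).const_mul (1 - ‖α‖ ^ 2))
    refine (by simpa [xnorm2] using this : Tendsto _ _ _).congr fun N => ?_
    have := sum_range_succ_mul_norm_sq_mulZSub_sub α k w N
    simp only [A, B]
    linarith
  obtain ⟨M, hM⟩ := hlim.bddAbove_range
  have hAM : ∀ N, A (N + 1) + (1 - ‖α‖ ^ 2) * B N ≤ M := fun N => hM ⟨N, rfl⟩
  have hA0 : ∀ N, 0 ≤ A N := fun N => sum_nonneg fun n _ => hA n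
  have hB0 : ∀ N, 0 ≤ B N := fun N => sum_nonneg fun n _ => hB n
  have hsA : Summable fun n => w n * ‖oneSubMul α k n‖ ^ 2 := by
    refine summable_of_sum_range_le (c := M) hA fun N => ?_
    have : A N ≤ A (N + 1) := by simp only [A, sum_range_succ]; linarith [hA N]
    nlinarith [hAM N, hB0 N]
  have hsB : Summable fun n => (w (n + 1) - w n) * ‖k n‖ ^ 2 :=
    summable_of_sum_range_le (c := M / (1 - ‖α‖ ^ 2)) hB fun N => by
      rw [le_div_iff₀ hr]; nlinarith [hAM N, hA0 (N + 1)]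
  refine ⟨hsA, hsB, tendsto_nhds_unique ?_ hlim⟩
  exact (hsA.hasSum.tendsto_sum_nat.comp (tendsto_add_atTop_nat 1)).add
    (hsB.hasSum.tendsto_sum_nat.const_mul _)

end Energy

section Contraction

variable {w : ℕ → ℝ}

lemma mul_sum_range_le_sum_range_mul (hw : Antitone w) {b : ℕ → ℝ}
    (hb : ∀ N, 0 ≤ ∑ n ∈ range N, b n) (N : ℕ) :
    w N * ∑ n ∈ range N, b n ≤ ∑ n ∈ range N, w n * b n := by
  induction N with
  | zero => simp
  | succ N ih =>
    rw [sum_range_succ, sum_range_succ]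
    nlinarith [hw N.le_succ, hb (N + 1), sum_range_succ b N]

lemma summable_tsum_mul_le_of_sum_range_le (hw : Antitone w) (hw0 : ∀ n, 0 ≤ w n)
    {a c : ℕ → ℝ} (ha : ∀ n, 0 ≤ a n) (hac : ∀ N, ∑ n ∈ range N, a n ≤ ∑ n ∈ range N, c n)
    (hc : Summable fun n => w n * c n) :
    Summable (fun n => w n * a n) ∧ ∑' n, w n * a n ≤ ∑' n, w n * c n := by
  have hpart : ∀ N, ∑ n ∈ range N, w n * a n ≤ ∑ n ∈ range N, w n * c n := fun N => by
    have := mul_sum_range_le_sum_range_mul hw (b := c - a)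
      (fun N => by simpa [sum_sub_distrib] using hac N) N
    simp only [Pi.sub_apply, mul_sub, sum_sub_distrib] at this
    nlinarith [hw0 N, hac N]
  obtain ⟨M, hM⟩ := hc.hasSum.tendsto_sum_nat.bddAbove_range
  have ha' : Summable fun n => w n * a n :=
    summable_of_sum_range_le (fun n => mul_nonneg (hw0 n) (ha n))
      fun N => (hpart N).trans (hM ⟨N, rfl⟩)
  exact ⟨ha', le_of_tendsto_of_tendsto' ha'.hasSum.tendsto_sum_nat hc.hasSum.tendsto_sum_nat
    hpart⟩

lemma summable_xnorm2_blaschkeMul_le (hw : Antitone w) (hw0 : ∀ n, 0 ≤ w n) {α : ℂ}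
    (hα : ‖α‖ ≤ 1) {c : ℕ → ℂ}
    (hc : Summable fun n => w n * ‖c n‖ ^ 2) :
    Summable (fun n => w n * ‖blaschkeMul α c n‖ ^ 2)
      ∧ xnorm2 w (blaschkeMul α c) ≤ xnorm2 w c :=
  summable_tsum_mul_le_of_sum_range_le hw hw0 (fun _ => by positivity)
    (sum_range_norm_sq_blaschkeMul_le c hα) hc

theorem exists_isCoeffs_prod_blaschkeFactor (hw : Antitone w) (hw0 : ∀ n, 0 ≤ w n)
    {ι : Type*} (s : Finset ι) {α : ι → ℂ}
    (hα : ∀ i ∈ s, ‖α i‖ ≤ 1) {c : ℕ → ℂ} {C : ℂ → ℂ} (hc : IsCoeffs c C)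
    (hsum : Summable fun n => w n * ‖c n‖ ^ 2) :
    ∃ e, IsCoeffs e (fun z => (∏ i ∈ s, blaschkeFactor (α i) z) * C z)
      ∧ Summable (fun n => w n * ‖e n‖ ^ 2) ∧ xnorm2 w e ≤ xnorm2 w c := by
  classical
  induction s using Finset.induction_on with
  | empty => exact ⟨c, by simpa using hc, hsum, le_rfl⟩
  | insert i s hi ih =>
    obtain ⟨e, he, hes, hle⟩ := ih fun j hj => hα j (mem_insert_of_mem hj)
    have hαi := hα i (mem_insert_self i s)
    obtain ⟨hsum', hle'⟩ := summable_xnorm2_blaschkeMul_le hw hw0 hαi hes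
    refine ⟨blaschkeMul (α i) e, fun z hz => ?_, hsum', hle'.trans hle⟩
    beta_reduce
    rw [prod_insert hi, mul_assoc]
    exact he.blaschkeMul hαi z hz

end Contraction

theorem summable_xnorm2_add_sum_ynorm2_blaschkeChain {w : ℕ → ℝ} (hw : Monotone w)
    (hw0 : 0 ≤ w 0) (α : ℕ → ℂ) {c : ℕ → ℂ} {C : ℂ → ℂ} (hc : IsCoeffs c C) (t : ℕ)
    (hα : ∀ i ∈ Icc 1 t, ‖α i‖ < 1)
    (hsum : Summable fun n => w n * ‖blaschkeChain α c t n‖ ^ 2) :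
    Summable (fun n => w n * ‖c n‖ ^ 2)
      ∧ (∀ i ∈ Icc 1 t, Summable fun n =>
          (w (n + 1) - w n) * ‖divOneSub (α i) (blaschkeChain α c (i - 1)) n‖ ^ 2)
      ∧ xnorm2 w c + ∑ i ∈ Icc 1 t,
          (1 - ‖α i‖ ^ 2) * ynorm2 w (divOneSub (α i) (blaschkeChain α c (i - 1)))
        = xnorm2 w (blaschkeChain α c t) := by
  induction t with
  | zero => exact ⟨hsum, by simp, by simp [blaschkeChain]⟩
  | succ t ih =>
    have hα' : ∀ i ∈ Icc 1 t, ‖α i‖ < 1 :=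
      fun i hi => hα i (Icc_subset_Icc_right t.le_succ hi)
    have hαt := hα (t + 1) (right_mem_Icc.2 (by omega))
    have hk := (hc.blaschkeChain fun i hi => (hα' i hi).le).divOneSub hαt.le
    obtain ⟨hsum', hY, hid⟩ := summable_xnorm2_oneSubMul_add_ynorm2 hw hw0 hαt
      (hk.tendsto_pow_mul_add hαt) hsum
    rw [oneSubMul_divOneSub] at hsum' hid
    obtain ⟨hc2, hYs, hids⟩ := ih hα' hsum'
    refine ⟨hc2, fun i hi => ?_, ?_⟩
    · rcases (mem_Icc.1 hi).2.lt_or_eq with hit | rfl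
      · exact hYs i (mem_Icc.2 ⟨(mem_Icc.1 hi).1, by omega⟩)
      · exact hY
    · rw [sum_Icc_succ_top (by omega), ← add_assoc, hids, Nat.add_sub_cancel]
      exact hid

lemma prod_blaschkeFactor_mul_div {α : ℕ → ℂ} {m j : ℕ} (hj : j ∈ Icc 1 m) {z W : ℂ}
    (hz : z ≠ α j) (h1 : 1 - conj (α j) * z ≠ 0) :
    (∏ i ∈ Icc 1 m, blaschkeFactor (α i) z) * W / (z - α j)
      = (∏ i ∈ Ioc j m, blaschkeFactor (α i) z)
          * ((∏ i ∈ Icc 1 (j - 1), blaschkeFactor (α i) z) * W / (1 - conj (α j) * z)) := by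
  obtain ⟨hj1, hjm⟩ := mem_Icc.1 hj
  obtain ⟨j, rfl⟩ : ∃ j', j = j' + 1 := ⟨j - 1, by omega⟩
  have hIcc : ∀ n, Icc 1 n = Ioc 0 n := Icc_add_one_left_eq_Ioc 0
  rw [hIcc, ← prod_Ioc_consecutive _ (Nat.zero_le _) hjm, ← hIcc, prod_Icc_succ_top (by omega),
    Nat.add_sub_cancel, blaschkeFactor]
  have : z - α (j + 1) ≠ 0 := sub_ne_zero.2 hz
  field_simp

theorem summable_xnorm2_le_of_hasSum_div {w : ℕ → ℝ} (hw : Antitone w) (hw0 : ∀ n, 0 ≤ w n)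
    {α : ℕ → ℂ} {m j : ℕ} (hα : ∀ i ∈ Icc 1 m, ‖α i‖ ≤ 1) (hj : j ∈ Icc 1 m)
    {g K : ℕ → ℂ} {G : ℂ → ℂ} (hg : IsCoeffs g G)
    (hK : ∀ z : ℂ, ‖z‖ < 1 → z ≠ α j →
      HasSum (fun n => K n * z ^ n)
        ((∏ i ∈ Icc 1 m, blaschkeFactor (α i) z) * G z / (z - α j)))
    (hsum : Summable fun n => w n * ‖divOneSub (α j) (blaschkeChain α g (j - 1)) n‖ ^ 2) :
    Summable (fun n => w n * ‖K n‖ ^ 2)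
      ∧ xnorm2 w K ≤ xnorm2 w (divOneSub (α j) (blaschkeChain α g (j - 1))) := by
  obtain ⟨hj1, hjm⟩ := mem_Icc.1 hj
  have hc := (hg.blaschkeChain (t := j - 1) fun i hi =>
    hα i (Icc_subset_Icc_right (by omega) hi)).divOneSub (hα j hj)
  obtain ⟨e, he, hes, hle⟩ := exists_isCoeffs_prod_blaschkeFactor hw hw0 (Ioc j m)
    (fun i hi => hα i (Ioc_subset_Icc_self.trans (Icc_subset_Icc_left hj1) hi)) hc hsum
  obtain rfl : K = e := coeffs_eq_of_hasSum (α j) hK fun z hz hne => by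
    rw [prod_blaschkeFactor_mul_div hj hne (one_sub_conj_mul_ne_zero (hα j hj) hz)]
    exact he z hz
  exact ⟨hes, hle⟩

theorem stmt7_general (γ : ℕ → ℝ) (hmono : Monotone γ) (h0 : γ 0 = 0)
    (hconc : ∀ n, γ (n + 2) - γ (n + 1) ≤ γ (n + 1) - γ n)
    (m : ℕ) (α : ℕ → ℂ) (hα : ∀ j ∈ Icc 1 m, ‖α j‖ < 1)
    (F G : ℂ → ℂ) (f g : ℕ → ℂ) (K : ℕ → ℕ → ℂ)
    (hf : IsCoeffs f F) (hg : IsCoeffs g G)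
    (hfac : ∀ z : ℂ, ‖z‖ < 1 →
      F z = (∏ j ∈ Icc 1 m, (z - α j) / (1 - (starRingEnd ℂ) (α j) * z)) * G z)
    -- `K j` are the Taylor coefficients of `F(z)/(z-α_j)` (singularity removed)
    (hK : ∀ j ∈ Icc 1 m, ∀ z : ℂ, ‖z‖ < 1 → z ≠ α j →
      HasSum (fun n => K j n * z ^ n) (F z / (z - α j)))
    (hX : Summable fun n => γ n * ‖f n‖ ^ 2) :
    (∀ j ∈ Icc 1 m, Summable fun n => (γ (n + 1) - γ n) * ‖K j n‖ ^ 2) ∧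
      xnorm2 γ g ≤
        xnorm2 γ f - ∑ j ∈ Icc 1 m, (1 - ‖α j‖ ^ 2) * ynorm2 γ (K j) := by
  have hΓ : Antitone fun n => γ (n + 1) - γ n := antitone_nat_of_succ_le hconc
  have hΓ0 : ∀ n, 0 ≤ γ (n + 1) - γ n := fun n => sub_nonneg.2 (hmono n.le_succ)
  have hα' : ∀ j ∈ Icc 1 m, ‖α j‖ ≤ 1 := fun j hj => (hα j hj).le
  obtain rfl : f = blaschkeChain α g m := coeffs_eq_of_hasSum 0
    (fun z hz _ => hfac z hz ▸ hf z hz) (fun z hz _ => hg.blaschkeChain hα' z hz)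
  obtain ⟨-, hY, hid⟩ := summable_xnorm2_add_sum_ynorm2_blaschkeChain hmono h0.ge α hg m hα hX
  have hKj : ∀ j ∈ Icc 1 m, Summable (fun n => (γ (n + 1) - γ n) * ‖K j n‖ ^ 2)
      ∧ ynorm2 γ (K j) ≤ ynorm2 γ (divOneSub (α j) (blaschkeChain α g (j - 1))) :=
    fun j hj => summable_xnorm2_le_of_hasSum_div hΓ hΓ0 hα' hj hg
      (fun z hz hne => hfac z hz ▸ hK j hj z hz hne) (hY j hj)
  refine ⟨fun j hj => (hKj j hj).1, ?_⟩
  have hsum_le := sum_le_sum fun j hj => mul_le_mul_of_nonneg_left (hKj j hj).2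
    (by nlinarith [hα j hj, norm_nonneg (α j)] : 0 ≤ 1 - ‖α j‖ ^ 2)
  linarith

/-- Theorem 2: if the differences `γ_{n+1}-γ_n` are monotone decreasing and `F ∈ X_γ`
has finitely many zeros `α_1,…,α_m` in `𝔻` with Blaschke decomposition `F = B·G`, then
`‖G‖_{X_γ}² ≤ ‖F‖_{X_γ}² − Σ_j (1-|α_j|²)‖F/(·-α_j)‖_{Y_γ}²`. -/
theorem stmt7 (γ : ℕ → ℝ) (hmono : Monotone γ) (h0 : γ 0 = 0)
    (hconc : ∀ n, γ (n + 2) - γ (n + 1) ≤ γ (n + 1) - γ n)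
    (m : ℕ) (α : ℕ → ℂ) (hα : ∀ j ∈ Icc 1 m, ‖α j‖ < 1)
    (F G : ℂ → ℂ) (f g : ℕ → ℂ) (K : ℕ → ℕ → ℂ)
    (hf : IsCoeffs f F) (hg : IsCoeffs g G)
    (hG0 : ∀ z : ℂ, ‖z‖ < 1 → G z ≠ 0)
    (hfac : ∀ z : ℂ, ‖z‖ < 1 →
      F z = (∏ j ∈ Icc 1 m, (z - α j) / (1 - (starRingEnd ℂ) (α j) * z)) * G z)
    -- `K j` are the Taylor coefficients of `F(z)/(z-α_j)` (singularity removed)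
    (hK : ∀ j ∈ Icc 1 m, ∀ z : ℂ, ‖z‖ < 1 → z ≠ α j →
      HasSum (fun n => K j n * z ^ n) (F z / (z - α j)))
    (hH2 : Summable fun n => ‖f n‖ ^ 2)
    (hX : Summable fun n => γ n * ‖f n‖ ^ 2) :
    (∀ j ∈ Icc 1 m, Summable fun n => (γ (n + 1) - γ n) * ‖K j n‖ ^ 2) ∧
      xnorm2 γ g ≤
        xnorm2 γ f - ∑ j ∈ Icc 1 m, (1 - ‖α j‖ ^ 2) * ynorm2 γ (K j) :=
  stmt7_general γ hmono h0 hconc m α hα F G f g K hf hg hfac hK hX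
end
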